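/- For nonempty finite A, B ⊆ 𝔽₂ⁿ with A ⊆ Spec_ε(B) for some ε > 0, one has 𝔼_{a,a'∈A}|𝔼_{b∈B}[(-1)^{⟨a+a',b⟩₂}]| ≥ ε². In particular, Pr_{a,a'∈A}[a + a' ∈ Spec_{ε²/2}(B)] ≥ ε²/2. -/

import Mathlib

open Finset

noncomputable def chi (x : ZMod 2) : ℝ := if x = 0 then 1 else -1

def ip {n : ℕ} (a b : Fin n → ZMod 2) : ZMod 2 := ∑ i, a i * b i

noncomputable def Dm {n : ℕ} (A B : Finset (Fin n → ZMod 2)) : ℝ :=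
  |∑ a ∈ A, ∑ b ∈ B, chi (ip a b)| / ((A.card : ℝ) * B.card)

/-- `Spec_α(B)`: vectors whose character average over `B` has absolute value at least `α`. -/
def Spec {n : ℕ} (α : ℝ) (B : Finset (Fin n → ZMod 2)) : Set (Fin n → ZMod 2) :=
  {x | α ≤ |∑ b ∈ B, chi (ip x b)| / (B.card : ℝ)}

/-!
Write `S x = ∑_{b ∈ B} χ(⟨x, b⟩)`. With `σ a = sign (S a)`, the hypothesis gives
`ε |A| |B| ≤ ∑_a σ_a S a = ∑_b ∑_a σ_a χ(⟨a, b⟩)`. Cauchy–Schwarz over `b` bounds the square of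
this by `|B| ∑_b (∑_a σ_a χ(⟨a, b⟩))²`, which equals `|B| ∑_{a,a'} σ_a σ_{a'} S (a + a')` because
`χ` is multiplicative, hence is at most `|B| ∑_{a,a'} |S (a + a')|`. The second claim is Markov's
inequality for the `[0, 1]`-valued quantity `|S (a + a')| / |B|`.
-/

theorem Finset.sum_le_card_filter_add_mul_card {ι : Type*} (s : Finset ι) (g : ι → ℝ) {c : ℝ}
    (hc : 0 ≤ c) (hg : ∀ i ∈ s, g i ≤ 1) :
    ∑ i ∈ s, g i ≤ #{i ∈ s | c ≤ g i} + c * #s := by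
  rw [← sum_filter_add_sum_filter_not s (fun i => c ≤ g i)]
  have h_large : ∑ i ∈ s with c ≤ g i, g i ≤ #{i ∈ s | c ≤ g i} := by
    simpa using sum_le_card_nsmul {i ∈ s | c ≤ g i} g 1 fun i hi => hg i (mem_filter.1 hi).1
  have h_small : ∑ i ∈ s with ¬c ≤ g i, g i ≤ c * #s := by
    calc ∑ i ∈ s with ¬c ≤ g i, g i ≤ #{i ∈ s | ¬c ≤ g i} • c :=
          sum_le_card_nsmul _ g c fun i hi => (not_le.1 (mem_filter.1 hi).2).le
      _ ≤ c * #s := by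
          rw [nsmul_eq_mul, mul_comm]
          exact mul_le_mul_of_nonneg_left (mod_cast card_filter_le _ _) hc
  linarith

theorem chi_add (x y : ZMod 2) : chi (x + y) = chi x * chi y := by
  have key : ∀ x y : ZMod 2, x + y = 0 ↔ (x = 0 ↔ y = 0) := by decide
  unfold chi
  by_cases hx : x = 0 <;> by_cases hy : y = 0 <;> simp [key, hx, hy]

theorem abs_chi (x : ZMod 2) : |chi x| = 1 := by
  unfold chi; split <;> simp

theorem ip_add_left {n : ℕ} (a a' b : Fin n → ZMod 2) : ip (a + a') b = ip a b + ip a' b := by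
  simp [ip, add_mul, sum_add_distrib]

noncomputable def charSum {n : ℕ} (B : Finset (Fin n → ZMod 2)) (x : Fin n → ZMod 2) : ℝ :=
  ∑ b ∈ B, chi (ip x b)

section CharSum

variable {n : ℕ} (A B : Finset (Fin n → ZMod 2))

theorem abs_charSum_le_card (x : Fin n → ZMod 2) : |charSum B x| ≤ #B := by
  calc |charSum B x| ≤ ∑ b ∈ B, |chi (ip x b)| := abs_sum_le_sum_abs _ _
    _ = #B := by simp [abs_chi]

theorem sq_sum_mul_chi_eq_sum_sum (w : (Fin n → ZMod 2) → ℝ) (b : Fin n → ZMod 2) :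
    (∑ a ∈ A, w a * chi (ip a b)) ^ 2
      = ∑ a ∈ A, ∑ a' ∈ A, w a * w a' * chi (ip (a + a') b) := by
  rw [sq, sum_mul_sum]
  refine sum_congr rfl fun a _ => sum_congr rfl fun a' _ => ?_
  rw [ip_add_left, chi_add]
  ring

theorem sq_sum_mul_charSum_le {w : (Fin n → ZMod 2) → ℝ} (hw : ∀ a, |w a| ≤ 1) :
    (∑ a ∈ A, w a * charSum B a) ^ 2 ≤ #B * ∑ a ∈ A, ∑ a' ∈ A, |charSum B (a + a')| := by
  have h_swap : ∑ a ∈ A, w a * charSum B a = ∑ b ∈ B, ∑ a ∈ A, w a * chi (ip a b) := by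
    simp only [charSum, mul_sum]
    exact sum_comm
  have h_expand : ∑ b ∈ B, (∑ a ∈ A, w a * chi (ip a b)) ^ 2
      = ∑ a ∈ A, ∑ a' ∈ A, w a * w a' * charSum B (a + a') := by
    simp only [sq_sum_mul_chi_eq_sum_sum, charSum, mul_sum]
    rw [sum_comm]
    exact sum_congr rfl fun a _ => sum_comm
  have h_weights : ∀ a a', w a * w a' * charSum B (a + a') ≤ |charSum B (a + a')| := fun a a' =>
    calc w a * w a' * charSum B (a + a') ≤ |w a * w a' * charSum B (a + a')| := le_abs_self _
      _ ≤ |charSum B (a + a')| := by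
          rw [abs_mul, abs_mul]
          exact mul_le_of_le_one_left (abs_nonneg _) (mul_le_one₀ (hw a) (abs_nonneg _) (hw a'))
  calc (∑ a ∈ A, w a * charSum B a) ^ 2 ≤ #B * ∑ b ∈ B, (∑ a ∈ A, w a * chi (ip a b)) ^ 2 := by
        rw [h_swap]
        exact sq_sum_le_card_mul_sum_sq
    _ ≤ #B * ∑ a ∈ A, ∑ a' ∈ A, |charSum B (a + a')| := by
        rw [h_expand]
        gcongr with a _ a' _
        exact h_weights a a'

theorem sq_sum_abs_charSum_le :
    (∑ a ∈ A, |charSum B a|) ^ 2 ≤ #B * ∑ a ∈ A, ∑ a' ∈ A, |charSum B (a + a')| := by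
  have h_sign : ∀ x : ℝ, |(SignType.sign x : ℝ)| ≤ 1 := fun x => by
    rcases SignType.trichotomy (SignType.sign x) with h | h | h <;> simp [h]
  simpa using sq_sum_mul_charSum_le A B (w := fun a => SignType.sign (charSum B a))
    fun a => h_sign _

theorem mem_spec_iff {α : ℝ} {x : Fin n → ZMod 2} : x ∈ Spec α B ↔ α ≤ |charSum B x| / #B :=
  Iff.rfl

theorem mul_card_le_sum_abs_charSum {ε : ℝ} (h : ∀ x ∈ A, x ∈ Spec ε B) :
    ε * #A * #B ≤ ∑ a ∈ A, |charSum B a| := by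
  rw [mul_comm ε, mul_assoc, ← nsmul_eq_mul]
  exact card_nsmul_le_sum A _ _ fun a ha =>
    mul_le_of_le_div₀ (abs_nonneg _) (Nat.cast_nonneg _) ((mem_spec_iff B).1 (h a ha))

theorem sq_mul_card_le_sum_sum_abs_charSum (hB : B.Nonempty) {ε : ℝ} (hε : 0 ≤ ε)
    (h : ∀ x ∈ A, x ∈ Spec ε B) :
    ε ^ 2 * #A ^ 2 * #B ≤ ∑ a ∈ A, ∑ a' ∈ A, |charSum B (a + a')| := by
  have hB_pos : (0 : ℝ) < #B := mod_cast hB.card_pos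
  refine le_of_mul_le_mul_left ?_ hB_pos
  calc #B * (ε ^ 2 * #A ^ 2 * #B) = (ε * #A * #B) ^ 2 := by ring
    _ ≤ (∑ a ∈ A, |charSum B a|) ^ 2 := by
        gcongr
        exact mul_card_le_sum_abs_charSum A B h
    _ ≤ #B * ∑ a ∈ A, ∑ a' ∈ A, |charSum B (a + a')| := sq_sum_abs_charSum_le A B

end CharSum

open scoped Classical in
/-- Sums of pairs from Spec_ε(B) land in Spec_{ε²/2}(B) with probability ≥ ε²/2. -/
theorem stmt_3 {n : ℕ} (A B : Finset (Fin n → ZMod 2)) (hA : A.Nonempty) (hB : B.Nonempty)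
    (ε : ℝ) (hε : 0 < ε) (h : ∀ x ∈ A, x ∈ Spec ε B) :
    ε ^ 2 ≤ (∑ a ∈ A, ∑ a' ∈ A, |∑ b ∈ B, chi (ip (a + a') b)| / (B.card : ℝ)) /
        ((A.card : ℝ) ^ 2) ∧
    (ε ^ 2 / 2) * (A.card : ℝ) ^ 2 ≤
      (((A ×ˢ A).filter fun p => p.1 + p.2 ∈ Spec (ε ^ 2 / 2) B).card : ℝ) := by
  have hB_pos : (0 : ℝ) < #B := mod_cast hB.card_pos
  have h_energy : ε ^ 2 * #A ^ 2 ≤ ∑ a ∈ A, ∑ a' ∈ A, |charSum B (a + a')| / #B := by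
    simp only [← sum_div]
    rw [le_div_iff₀ hB_pos]
    exact sq_mul_card_le_sum_sum_abs_charSum A B hB hε.le h
  refine ⟨(le_div_iff₀ (by positivity)).2 h_energy, ?_⟩
  have h_markov := sum_le_card_filter_add_mul_card (A ×ˢ A)
    (fun p => |charSum B (p.1 + p.2)| / #B) (c := ε ^ 2 / 2) (by positivity)
    fun p _ => div_le_one_of_le₀ (abs_charSum_le_card B _) hB_pos.le
  rw [sum_product, card_product, Nat.cast_mul] at h_markov
  have h_filter : {p ∈ A ×ˢ A | ε ^ 2 / 2 ≤ |charSum B (p.1 + p.2)| / #B}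
      = {p ∈ A ×ˢ A | p.1 + p.2 ∈ Spec (ε ^ 2 / 2) B} := by
    ext; simp only [mem_filter, mem_spec_iff]
  rw [h_filter] at h_markov
  linarith
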